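/- Let b ≠ 0 and let h_b be the b-orbit, i.e. the unique solution of h''(x) − coth(x) h'(x) + sin(2 h(x)) = 0 on (0,∞) with h_b(x)/x² → b as x → 0⁺. If |h_b(x)| < π/2 for all x > 0, then lim_{x→∞} h_b'(x) = 0 and either lim_{x→∞} h_b(x) = π/2 or lim_{x→∞} h_b(x) = −π/2; in other words, h_b is a connecting orbit. -/

import Mathlib

open Real Set Filter Topology

/-!
The energy `E = h'²/2 - cos(2h)/2` satisfies `E' = coth(x) h'² ≥ 0`. If `E` ever exceeded `1/2`,
`|h'|` would stay bounded away from `0` and `h` would leave the strip `|h| < π/2`; so `E`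
increases to a finite limit `L`. As `coth ≥ 1`, `h'²` is integrable, and `h''` is bounded, so
`h' → 0` (Barbalat). Then `cos(2h) → -2L`, hence `|h|` converges to some `A`, which is positive
because `h ≢ 0` (as `b ≠ 0`) forces `L > -1/2`. So `h → ±A`, and `h'' → ∓sin(2A)` must vanish,
which forces `A = π/2`.
-/

/-- A global `C²` solution of equation (14), `h'' - coth(x) h' + sin(2h) = 0` on `(0,∞)`. -/
def SolvesEq14 (h : ℝ → ℝ) : Prop :=
  ContDiffOn ℝ 2 h (Set.Ioi 0) ∧
  ∀ x ∈ Set.Ioi (0:ℝ),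
    deriv (deriv h) x - (Real.cosh x / Real.sinh x) * deriv h x + Real.sin (2 * h x) = 0

/-- The `b`-orbit: a global solution of equation (14) with `h(x)/x² → b` as `x → 0⁺`. -/
def IsBOrbit (b : ℝ) (h : ℝ → ℝ) : Prop :=
  SolvesEq14 h ∧ Filter.Tendsto (fun x => h x / x ^ 2) (𝓝[>] (0:ℝ)) (𝓝 b)

lemma mul_sub_le_sub_of_le_hasDerivAt {f f' : ℝ → ℝ} {C x y : ℝ} (hxy : x ≤ y)
    (hf : ∀ z ∈ Icc x y, HasDerivAt f (f' z) z) (hC : ∀ z ∈ Icc x y, C ≤ f' z) :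
    C * (y - x) ≤ f y - f x :=
  (convex_Icc x y).mul_sub_le_image_sub_of_le_deriv
    (fun z hz => (hf z hz).continuousAt.continuousWithinAt)
    (fun z hz => (hf z (interior_subset hz)).differentiableAt.differentiableWithinAt)
    (fun z hz => (hf z (interior_subset hz)).deriv ▸ hC z (interior_subset hz))
    x (left_mem_Icc.2 hxy) y (right_mem_Icc.2 hxy) hxy

lemma mul_sub_le_abs_sub_of_le_abs_deriv {f f' : ℝ → ℝ} {a δ y : ℝ} (hδ : 0 < δ)
    (hf : ∀ x ≥ a, HasDerivAt f (f' x) x) (hf'c : ContinuousOn f' (Ici a))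
    (hf' : ∀ x ≥ a, δ ≤ |f' x|) (hy : a ≤ y) :
    δ * (y - a) ≤ |f y - f a| := by
  rcases isPreconnected_Ici.eq_or_eq_neg_of_sq_eq hf'c hf'c.abs (fun x _ => (sq_abs (f' x)).symm)
    (fun hx => (hδ.trans_le (hf' _ hx)).ne') with hpos | hneg
  · calc δ * (y - a) ≤ f y - f a :=
          mul_sub_le_sub_of_le_hasDerivAt hy (fun z hz => hf z hz.1)
            (fun z hz => (hf' z hz.1).trans_eq (hpos hz.1).symm)
      _ ≤ |f y - f a| := le_abs_self _
  · calc δ * (y - a) ≤ -f y - -f a :=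
          mul_sub_le_sub_of_le_hasDerivAt hy (fun z hz => (hf z hz.1).neg)
            (fun z hz => by rw [hneg hz.1, Pi.neg_apply, neg_neg]; exact hf' z hz.1)
      _ ≤ |f y - f a| := by linarith [neg_abs_le (f y - f a)]

/-- A form of Barbalat's lemma: `f` is uniformly Lipschitz and `∫ f²` converges, so a value
`|f x| ≥ ε` would force a fixed increment of `E` on `[x, x + δ]` arbitrarily far out. -/
lemma tendsto_zero_of_sq_le_deriv_of_tendsto {f f' E E' : ℝ → ℝ} {a C L : ℝ}
    (hf : ∀ x ≥ a, HasDerivAt f (f' x) x) (hf' : ∀ x ≥ a, |f' x| ≤ C)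
    (hE : ∀ x ≥ a, HasDerivAt E (E' x) x) (hfE : ∀ x ≥ a, f x ^ 2 ≤ E' x)
    (hEL : Tendsto E atTop (𝓝 L)) : Tendsto f atTop (𝓝 0) := by
  refine Metric.tendsto_nhds.2 fun ε hε => ?_
  have hC : 0 ≤ C := (abs_nonneg _).trans (hf' a le_rfl)
  set δ := ε / (2 * (C + 1)) with hδdef
  have hδ : 0 < δ := by positivity
  have hCδ : C * δ ≤ ε / 2 := by
    have : (C + 1) * δ = ε / 2 := by rw [hδdef]; field_simp
    nlinarith
  have hinc : Tendsto (fun x => E (x + δ) - E x) atTop (𝓝 0) := by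
    simpa using (hEL.comp (tendsto_atTop_add_const_right _ δ tendsto_id)).sub hEL
  filter_upwards [hinc.eventually (gt_mem_nhds (by positivity : 0 < δ * (ε / 2) ^ 2)),
    eventually_ge_atTop a] with x hx hxa
  rw [Real.dist_eq, sub_zero]
  by_contra! hfx
  have hlip : ∀ y ∈ Icc x (x + δ), |f y - f x| ≤ C * δ := fun y hy => by
    have := (convex_Ici a).norm_image_sub_le_of_norm_hasDerivWithin_le
      (fun z hz => (hf z hz).hasDerivWithinAt) hf' hxa (hxa.trans hy.1)
    simp only [Real.norm_eq_abs, abs_of_nonneg (sub_nonneg.2 hy.1)] at this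
    exact this.trans (mul_le_mul_of_nonneg_left (by linarith [hy.2]) hC)
  have hgrowth := mul_sub_le_sub_of_le_hasDerivAt (C := (ε / 2) ^ 2) (x := x) (y := x + δ)
    (by linarith) (fun y hy => hE y (hxa.trans hy.1)) fun y hy => by
      have hfy : ε / 2 ≤ |f y| := by
        linarith [hlip y hy, abs_sub_abs_le_abs_sub (f x) (f y), abs_sub_comm (f x) (f y)]
      calc (ε / 2) ^ 2 ≤ |f y| ^ 2 := by gcongr
        _ = f y ^ 2 := sq_abs _
        _ ≤ E' y := hfE y (hxa.trans hy.1)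
  rw [add_sub_cancel_left] at hgrowth
  linarith

lemma eq_zero_of_tendsto_of_tendsto_deriv {f f' : ℝ → ℝ} {ℓ m : ℝ}
    (hf : ∀ᶠ x in atTop, HasDerivAt f (f' x) x) (hfℓ : Tendsto f atTop (𝓝 ℓ))
    (hf'm : Tendsto f' atTop (𝓝 m)) : m = 0 := by
  wlog hm : 0 < m generalizing f f' ℓ m
  · rcases (not_lt.1 hm).lt_or_eq with hm | hm
    · linarith [this (hf.mono fun x hx => hx.neg) hfℓ.neg hf'm.neg (neg_pos.2 hm)]
    · exact hm
  have hinc : Tendsto (fun x => f (x + 1) - f x) atTop (𝓝 0) := by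
    simpa using (hfℓ.comp (tendsto_atTop_add_const_right _ 1 tendsto_id)).sub hfℓ
  obtain ⟨X, hX⟩ :=
    (hf.and (hf'm.eventually (lt_mem_nhds (half_lt_self hm)))).exists_forall_of_atTop
  have : m / 2 ≤ 0 := ge_of_tendsto hinc <| by
    filter_upwards [eventually_ge_atTop X] with x hx
    simpa using mul_sub_le_sub_of_le_hasDerivAt (x := x) (y := x + 1) (by linarith)
      (fun z hz => (hX z (hx.trans hz.1)).1) (fun z hz => (hX z (hx.trans hz.1)).2.le)
  linarith

lemma tendsto_or_tendsto_neg_of_tendsto_abs {g : ℝ → ℝ} {a A : ℝ} (hg : ContinuousOn g (Ici a))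
    (hA : 0 < A) (hgA : Tendsto (fun x => |g x|) atTop (𝓝 A)) :
    Tendsto g atTop (𝓝 A) ∨ Tendsto g atTop (𝓝 (-A)) := by
  obtain ⟨X, hX⟩ :=
    ((hgA.eventually (lt_mem_nhds hA)).and (eventually_ge_atTop a)).exists_forall_of_atTop
  have hc : ContinuousOn g (Ici X) := hg.mono fun x hx => (hX x hx).2
  rcases isPreconnected_Ici.eq_or_eq_neg_of_sq_eq hc hc.abs (fun x _ => (sq_abs (g x)).symm)
    (fun hx => (hX _ hx).1.ne') with hpos | hneg
  · exact .inl <| hgA.congr' <| by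
      filter_upwards [eventually_ge_atTop X] with x hx using (hpos hx).symm
  · exact .inr <| hgA.neg.congr' <| by
      filter_upwards [eventually_ge_atTop X] with x hx using (hneg hx).symm

lemma exists_tendsto_atTop_of_monotoneOn_Ioi {f : ℝ → ℝ} {a M : ℝ} (hf : MonotoneOn f (Ioi a))
    (hM : ∀ x > a, f x ≤ M) : ∃ L, Tendsto f atTop (𝓝 L) ∧ ∀ x > a, f x ≤ L := by
  have hmono : Monotone fun x => f (max x (a + 1)) := fun x y hxy =>
    hf (by simp only [mem_Ioi]; linarith [le_max_right x (a + 1)])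
      (by simp only [mem_Ioi]; linarith [le_max_right y (a + 1)]) (max_le_max_right _ hxy)
  have hlim := tendsto_atTop_ciSup hmono ⟨M, by
    rintro _ ⟨x, rfl⟩; exact hM _ (by linarith [le_max_right x (a + 1)])⟩
  have hfL : Tendsto f atTop (𝓝 (⨆ x, f (max x (a + 1)))) := hlim.congr' <| by
    filter_upwards [eventually_ge_atTop (a + 1)] with x hx using by rw [max_eq_left hx]
  refine ⟨_, hfL, fun x hx => ge_of_tendsto hfL ?_⟩
  filter_upwards [eventually_ge_atTop x] with y hy using hf hx (hx.trans_le hy) hy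

lemma exists_ne_zero_of_tendsto_div_sq {h : ℝ → ℝ} {b : ℝ} (hb : b ≠ 0)
    (hlim : Tendsto (fun x => h x / x ^ 2) (𝓝[>] 0) (𝓝 b)) : ∃ x > 0, h x ≠ 0 := by
  by_contra! hzero
  refine hb (tendsto_nhds_unique hlim (tendsto_const_nhds.congr' ?_))
  filter_upwards [self_mem_nhdsWithin] with x hx using by rw [hzero x hx, zero_div]

lemma eq_pi_div_two_of_sin_two_mul_eq_zero {A : ℝ} (hA : 0 < A) (hAπ : A ≤ π / 2)
    (hsin : sin (2 * A) = 0) : A = π / 2 := by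
  by_contra hne
  exact (sin_pos_of_pos_of_lt_pi (by linarith) (by linarith [lt_of_le_of_ne hAπ hne])).ne' hsin

lemma abs_eq_arccos_cos_two_mul_div_two {y : ℝ} (hy : |y| ≤ π / 2) :
    |y| = arccos (cos (2 * y)) / 2 := by
  rw [← cos_abs, abs_mul, abs_two, arccos_cos (by positivity) (by linarith)]
  ring

lemma one_lt_coth {x : ℝ} (hx : 0 < x) : 1 < cosh x / sinh x :=
  (one_lt_div (sinh_pos_iff.2 hx)).2 (sinh_lt_cosh x)

lemma coth_le_coth_one {x : ℝ} (hx : 1 ≤ x) : cosh x / sinh x ≤ cosh 1 / sinh 1 := by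
  rw [div_le_div_iff₀ (sinh_pos_iff.2 (by linarith)) (sinh_pos_iff.2 one_pos)]
  have h1 : sinh (1 - x) ≤ 0 := sinh_nonpos_iff.2 (by linarith)
  rw [sinh_sub] at h1
  linarith

lemma tendsto_coth_mul_of_tendsto_zero {u : ℝ → ℝ} (hu : Tendsto u atTop (𝓝 0)) :
    Tendsto (fun x => cosh x / sinh x * u x) atTop (𝓝 0) :=
  isBoundedUnder_le_mul_tendsto_zero (isBoundedUnder_of_eventually_le (a := cosh 1 / sinh 1) <| by
    filter_upwards [eventually_ge_atTop (1 : ℝ)] with x hx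
    rw [Function.comp_apply, Real.norm_eq_abs,
      abs_of_pos (one_pos.trans (one_lt_coth (one_pos.trans_le hx)))]
    exact coth_le_coth_one hx) hu

noncomputable def eq14Energy (h : ℝ → ℝ) (x : ℝ) : ℝ := deriv h x ^ 2 / 2 - cos (2 * h x) / 2

lemma neg_half_lt_eq14Energy {h : ℝ → ℝ} {x : ℝ} (hx : |h x| < π / 2) (h0 : h x ≠ 0) :
    -(1 / 2) < eq14Energy h x := by
  have hbx := abs_lt.1 hx
  have hcos : cos (2 * h x) < 1 := (cos_le_one _).lt_of_ne fun h1 => h0 <| by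
    linarith [(cos_eq_one_iff_of_lt_of_lt (by linarith) (by linarith)).1 h1]
  unfold eq14Energy
  nlinarith [sq_nonneg (deriv h x)]

lemma tendsto_abs_of_tendsto_eq14Energy {h : ℝ → ℝ} {L : ℝ} (hbound : ∀ x > 0, |h x| < π / 2)
    (hEL : Tendsto (eq14Energy h) atTop (𝓝 L)) (hf0 : Tendsto (deriv h) atTop (𝓝 0)) :
    Tendsto (fun x => |h x|) atTop (𝓝 (arccos (-(2 * L)) / 2)) := by
  have hcos : Tendsto (fun x => cos (2 * h x)) atTop (𝓝 (-(2 * L))) := by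
    have := (hf0.pow 2).sub (hEL.const_mul 2)
    rw [zero_pow two_ne_zero, zero_sub] at this
    exact this.congr fun x => by unfold eq14Energy; ring
  refine (((continuous_arccos.tendsto _).comp hcos).div_const 2).congr' ?_
  filter_upwards [eventually_gt_atTop 0] with x hx
  exact (abs_eq_arccos_cos_two_mul_div_two (hbound x hx).le).symm

namespace SolvesEq14

variable {h : ℝ → ℝ} {x L : ℝ}

lemma hasDerivAt (hs : SolvesEq14 h) (hx : 0 < x) : HasDerivAt h (deriv h x) x :=
  ((hs.1.differentiableOn (by norm_num)).differentiableAt (Ioi_mem_nhds hx)).hasDerivAt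

lemma contDiffOn_deriv (hs : SolvesEq14 h) : ContDiffOn ℝ 1 (deriv h) (Ioi 0) :=
  hs.1.deriv_of_isOpen isOpen_Ioi (by norm_num)

lemma hasDerivAt_deriv (hs : SolvesEq14 h) (hx : 0 < x) :
    HasDerivAt (deriv h) (cosh x / sinh x * deriv h x - sin (2 * h x)) x := by
  have hd : HasDerivAt (deriv h) (deriv (deriv h) x) x :=
    ((hs.contDiffOn_deriv.differentiableOn one_ne_zero).differentiableAt
      (Ioi_mem_nhds hx)).hasDerivAt
  convert hd using 1
  linarith [hs.2 x hx]

lemma hasDerivAt_eq14Energy (hs : SolvesEq14 h) (hx : 0 < x) :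
    HasDerivAt (eq14Energy h) (cosh x / sinh x * deriv h x ^ 2) x := by
  have := (((hs.hasDerivAt_deriv hx).pow 2).div_const 2).sub
    ((((hs.hasDerivAt hx).const_mul 2).cos).div_const 2)
  exact this.congr_deriv (by push_cast; ring)

lemma monotoneOn_eq14Energy (hs : SolvesEq14 h) : MonotoneOn (eq14Energy h) (Ioi 0) := by
  refine monotoneOn_of_hasDerivWithinAt_nonneg (convex_Ioi 0)
    (fun x hx => (hs.hasDerivAt_eq14Energy hx).continuousAt.continuousWithinAt)
    (fun x hx => (hs.hasDerivAt_eq14Energy (interior_subset hx)).hasDerivWithinAt)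
    fun x hx => mul_nonneg ?_ (sq_nonneg _)
  exact (one_pos.trans (one_lt_coth (interior_subset hx))).le

/-- An energy above `1/2` keeps `|h'|` away from `0`, so `h` would travel farther than the width
`π` of the strip. -/
lemma eq14Energy_le_half (hs : SolvesEq14 h) (hbound : ∀ x > 0, |h x| < π / 2) (hx : 0 < x) :
    eq14Energy h x ≤ 1 / 2 := by
  by_contra! hgt
  set δ := √(2 * eq14Energy h x - 1)
  have hδ : 0 < δ := sqrt_pos.2 (by linarith)
  have hδh' : ∀ y ≥ x, δ ≤ |deriv h y| := fun y hy => by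
    rw [← sqrt_sq_eq_abs]
    refine sqrt_le_sqrt ?_
    have := hs.monotoneOn_eq14Energy hx (hx.trans_le hy) hy
    unfold eq14Energy at this ⊢
    linarith [neg_one_le_cos (2 * h y)]
  have hy : x ≤ x + π / δ := le_add_of_nonneg_right (by positivity)
  have hmove := mul_sub_le_abs_sub_of_le_abs_deriv hδ
    (fun y hy => hs.hasDerivAt (hx.trans_le hy))
    (hs.contDiffOn_deriv.continuousOn.mono (Ici_subset_Ioi.2 hx)) hδh' hy
  rw [add_sub_cancel_left, mul_div_cancel₀ _ hδ.ne'] at hmove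
  linarith [abs_sub (h (x + π / δ)) (h x), hbound x hx, hbound _ (hx.trans_le hy)]

lemma abs_deriv_le_two (hs : SolvesEq14 h) (hbound : ∀ x > 0, |h x| < π / 2) (hx : 0 < x) :
    |deriv h x| ≤ 2 := by
  have := hs.eq14Energy_le_half hbound hx
  unfold eq14Energy at this
  rw [abs_le]
  constructor <;> nlinarith [cos_le_one (2 * h x)]

lemma abs_deriv_deriv_le (hs : SolvesEq14 h) (hbound : ∀ x > 0, |h x| < π / 2) (hx : 1 ≤ x) :
    |cosh x / sinh x * deriv h x - sin (2 * h x)| ≤ 2 * (cosh 1 / sinh 1) + 1 := by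
  have hx0 : 0 < x := one_pos.trans_le hx
  have hcoth : |cosh x / sinh x * deriv h x| ≤ 2 * (cosh 1 / sinh 1) := by
    rw [abs_mul, abs_of_pos (one_pos.trans (one_lt_coth hx0)), mul_comm 2]
    exact mul_le_mul (coth_le_coth_one hx) (hs.abs_deriv_le_two hbound hx0) (abs_nonneg _)
      (one_pos.trans (one_lt_coth one_pos)).le
  linarith [abs_sub (cosh x / sinh x * deriv h x) (sin (2 * h x)), abs_sin_le_one (2 * h x)]

lemma exists_tendsto_eq14Energy (hs : SolvesEq14 h) (hbound : ∀ x > 0, |h x| < π / 2) :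
    ∃ L, Tendsto (eq14Energy h) atTop (𝓝 L) ∧ ∀ x > 0, eq14Energy h x ≤ L :=
  exists_tendsto_atTop_of_monotoneOn_Ioi hs.monotoneOn_eq14Energy
    fun _ hx => hs.eq14Energy_le_half hbound hx

lemma tendsto_deriv_atTop_zero (hs : SolvesEq14 h) (hbound : ∀ x > 0, |h x| < π / 2)
    (hEL : Tendsto (eq14Energy h) atTop (𝓝 L)) : Tendsto (deriv h) atTop (𝓝 0) :=
  tendsto_zero_of_sq_le_deriv_of_tendsto (a := 1)
    (fun _ hx => hs.hasDerivAt_deriv (one_pos.trans_le hx))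
    (fun _ hx => hs.abs_deriv_deriv_le hbound hx)
    (fun _ hx => hs.hasDerivAt_eq14Energy (one_pos.trans_le hx))
    (fun _ hx => le_mul_of_one_le_left (sq_nonneg _) (one_lt_coth (one_pos.trans_le hx)).le) hEL

lemma sin_two_mul_eq_zero_of_tendsto (hs : SolvesEq14 h) (hf0 : Tendsto (deriv h) atTop (𝓝 0))
    {ℓ : ℝ} (hℓ : Tendsto h atTop (𝓝 ℓ)) : sin (2 * ℓ) = 0 := by
  have h'' : Tendsto (fun x => cosh x / sinh x * deriv h x - sin (2 * h x)) atTop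
      (𝓝 (0 - sin (2 * ℓ))) :=
    (tendsto_coth_mul_of_tendsto_zero hf0).sub ((continuous_sin.tendsto _).comp (hℓ.const_mul 2))
  have := eq_zero_of_tendsto_of_tendsto_deriv
    ((eventually_gt_atTop 0).mono fun _ hx => hs.hasDerivAt_deriv hx) hf0 h''
  linarith

end SolvesEq14

/-- **Lemma 2.** A `b`-orbit (with `b ≠ 0`) which satisfies `|h(x)| < π/2` for all
`x > 0` is a connecting orbit: `h' → 0` and `h → π/2` or `h → -π/2` as `x → ∞`. -/
theorem trapped_b_orbit_is_connecting
    (b : ℝ) (hb : b ≠ 0) (h : ℝ → ℝ) (horb : IsBOrbit b h)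
    (hbound : ∀ x > (0:ℝ), |h x| < π / 2) :
    Filter.Tendsto (deriv h) Filter.atTop (𝓝 0) ∧
    (Filter.Tendsto h Filter.atTop (𝓝 (π / 2)) ∨
      Filter.Tendsto h Filter.atTop (𝓝 (-(π / 2)))) := by
  obtain ⟨hs, hlim⟩ := horb
  obtain ⟨L, hEL, hEle⟩ := hs.exists_tendsto_eq14Energy hbound
  have hf0 := hs.tendsto_deriv_atTop_zero hbound hEL
  set A := arccos (-(2 * L)) / 2
  have hA0 : 0 < A := by
    obtain ⟨x, hx, hx0⟩ := exists_ne_zero_of_tendsto_div_sq hb hlim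
    have := (neg_half_lt_eq14Energy (hbound x hx) hx0).trans_le (hEle x hx)
    exact half_pos (arccos_pos.2 (by linarith))
  have hAπ : A ≤ π / 2 := div_le_div_of_nonneg_right (arccos_le_pi _) two_pos.le
  refine ⟨hf0, ?_⟩
  rcases tendsto_or_tendsto_neg_of_tendsto_abs (hs.1.continuousOn.mono (Ici_subset_Ioi.2 one_pos))
    hA0 (tendsto_abs_of_tendsto_eq14Energy hbound hEL hf0) with hℓ | hℓ
  · have hsin := hs.sin_two_mul_eq_zero_of_tendsto hf0 hℓ
    exact .inl (eq_pi_div_two_of_sin_two_mul_eq_zero hA0 hAπ hsin ▸ hℓ)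
  · have hsin := hs.sin_two_mul_eq_zero_of_tendsto hf0 hℓ
    rw [mul_neg, sin_neg, neg_eq_zero] at hsin
    exact .inr (eq_pi_div_two_of_sin_two_mul_eq_zero hA0 hAπ hsin ▸ hℓ)
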